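/- arXiv:1301.3374 — 3 statements merged into one kernel-verified Lean document; each statement's English description precedes it below -/
import Mathlib

section
/- Let X and Y be real Banach spaces, let ε ≥ 0, and let f : X → Y be a standard ε-isometry. Then for every bounded linear functional x* ∈ X* there exists φ ∈ Y* with ‖φ‖ = ‖x*‖ such that |⟨φ, f(x)⟩ − ⟨x*, x⟩| ≤ 4ε‖x*‖ for all x ∈ X. -/
open scoped ENNReal ZeroAtInfty

noncomputable section

/-- `f : X → Y` is a *standard ε-isometry*: `f 0 = 0` and
`|‖f x - f y‖ - ‖x - y‖| ≤ ε` for all `x, y`. -/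
def StdEpsIsom {X Y : Type*} [NormedAddCommGroup X] [NormedAddCommGroup Y]
    (ε : ℝ) (f : X → Y) : Prop :=
  f 0 = 0 ∧ ∀ x y : X, |‖f x - f y‖ - ‖x - y‖| ≤ ε

/-- `L(f)`: the closed linear span of the range of `f` in `Y`. -/
def Lf {X Y : Type*} [NormedAddCommGroup Y] [NormedSpace ℝ Y] (f : X → Y) :
    Submodule ℝ Y :=
  (Submodule.span ℝ (Set.range f)).topologicalClosure

theorem mem_Lf {X Y : Type*} [NormedAddCommGroup Y] [NormedSpace ℝ Y] (f : X → Y) (x : X) :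
    f x ∈ Lf f :=
  Submodule.le_topologicalClosure _ (Submodule.subset_span ⟨x, rfl⟩)

/-- A standard ε-isometry `f` is *stable* if for some `α, γ > 0` there is a bounded linear
operator `T : L(f) → X` with `‖T‖ ≤ α` such that `‖T (f x) - x‖ ≤ γ ε` for all `x`. -/
def IsStable {X Y : Type*} [NormedAddCommGroup X] [NormedSpace ℝ X]
    [NormedAddCommGroup Y] [NormedSpace ℝ Y] (ε : ℝ) (f : X → Y) : Prop :=
  ∃ α γ : ℝ, 0 < α ∧ 0 < γ ∧
    ∃ T : Lf f →L[ℝ] X, ‖T‖ ≤ α ∧ ∀ x : X, ‖T ⟨f x, mem_Lf f x⟩ - x‖ ≤ γ * ε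

/-- The pair `(X, Y)` is *stable* if every standard ε-isometry `f : X → Y` (ε > 0) is stable. -/
def PairStable (X Y : Type*) [NormedAddCommGroup X] [NormedSpace ℝ X]
    [NormedAddCommGroup Y] [NormedSpace ℝ Y] : Prop :=
  ∀ ε : ℝ, 0 < ε → ∀ f : X → Y, StdEpsIsom ε f → IsStable ε f

/-!
Let `D` be the derivative of the norm at a point `z` where it is differentiable. If `ψₜ` has norm
at most one and attains the norm of `f (t⁻¹ • z) - f (-(t⁻¹ • z))`, the ε-isometry inequalities
give `ψₜ (f x) ≤ t⁻¹ (‖z + t • x‖ - ‖z‖) + 3ε`, and the same for `-ψₜ` and `-x`; so a weak*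
cluster point `φ` of `ψₜ` as `t → 0⁺` satisfies `|φ (f x) - D x| ≤ 3ε`. The set of functionals
`x'` admitting such a `φ` is convex and weak*-closed. In finite dimension the norm is
differentiable on a dense set (Rademacher), so this set is norming and, by Hahn–Banach separation
in the weak* topology, contains the unit ball. A general `x'` is handled on finite-dimensional
subspaces, and the functionals obtained there are glued by Banach–Alaoglu. Finally `‖φ‖ ≥ ‖x'‖`
is forced by the estimate itself, since `f` is almost isometric at large scales.
-/

open Filter Topology

section

variable {X Y : Type*} [NormedAddCommGroup X] [NormedAddCommGroup Y]

namespace StdEpsIsom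

variable {ε : ℝ} {f : X → Y}

theorem norm_sub_le (hf : StdEpsIsom ε f) (x y : X) : ‖f x - f y‖ ≤ ‖x - y‖ + ε := by
  linarith [(abs_le.mp (hf.2 x y)).2]

theorem le_norm_sub (hf : StdEpsIsom ε f) (x y : X) : ‖x - y‖ - ε ≤ ‖f x - f y‖ := by
  linarith [(abs_le.mp (hf.2 x y)).1]

theorem norm_le (hf : StdEpsIsom ε f) (x : X) : ‖f x‖ ≤ ‖x‖ + ε := by
  simpa [hf.1] using hf.norm_sub_le x 0

end StdEpsIsom

variable [NormedSpace ℝ X]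

theorem StdEpsIsom.comp_linearIsometry {ε : ℝ} {f : X → Y} {E : Type*} [NormedAddCommGroup E]
    [NormedSpace ℝ E] (hf : StdEpsIsom ε f) (L : E →ₗᵢ[ℝ] X) : StdEpsIsom ε (f ∘ L) :=
  ⟨by simp [hf.1], fun x y => by simpa [← map_sub] using hf.2 (L x) (L y)⟩

theorem norm_add_inv_smul_sub_norm (x z : X) {t : ℝ} (ht : 0 < t) :
    ‖x + t⁻¹ • z‖ - ‖t⁻¹ • z‖ = t⁻¹ * (‖z + t • x‖ - ‖z‖) := by
  have : x + t⁻¹ • z = t⁻¹ • (z + t • x) := by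
    rw [smul_add, inv_smul_smul₀ ht.ne', add_comm]
  rw [this, norm_smul, norm_smul, Real.norm_of_nonneg (inv_nonneg.mpr ht.le), mul_sub]

theorem DifferentiableAt.tendsto_slope_norm {z : X} (hz : DifferentiableAt ℝ (‖·‖) z) (x : X) :
    Tendsto (fun t : ℝ => t⁻¹ * (‖z + t • x‖ - ‖z‖)) (𝓝[>] 0) (𝓝 (fderiv ℝ (‖·‖) z x)) := by
  simpa using (hz.hasFDerivAt.hasLineDerivAt x).tendsto_slope_zero_right

theorem exists_differentiableAt_norm_lt_fderiv_apply [FiniteDimensional ℝ X] (v : X) {η : ℝ}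
    (hη : 0 < η) : ∃ z, DifferentiableAt ℝ (‖·‖) z ∧ ‖v‖ - η < fderiv ℝ (‖·‖) z v := by
  obtain ⟨z, hz, hvz⟩ := (dense_differentiableAt_norm (E := X)).exists_dist_lt v (half_pos hη)
  refine ⟨z, hz, ?_⟩
  have hD1 : ‖fderiv ℝ (‖·‖) z‖ ≤ 1 := by
    simpa using norm_fderiv_le_of_lipschitz ℝ lipschitzWith_one_norm (x₀ := z)
  have hD : fderiv ℝ (‖·‖) z (z - v) ≤ ‖z - v‖ :=
    (le_abs_self _).trans (by simpa using (fderiv ℝ (‖·‖) z).le_of_opNorm_le hD1 (z - v))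
  rw [map_sub, hz.fderiv_norm_self, norm_sub_rev] at hD
  rw [dist_eq_norm] at hvz
  linarith [norm_sub_norm_le v z]

theorem StrongDual.norm_le_of_apply_le_mul_norm_add {x' : StrongDual ℝ X} {A B : ℝ} (hA : 0 ≤ A)
    (h : ∀ x, x' x ≤ A * ‖x‖ + B) : ‖x'‖ ≤ A := by
  have hle (x : X) : x' x ≤ A * ‖x‖ := by
    have hlim : Tendsto (fun t : ℝ => A * ‖x‖ + B * t⁻¹) atTop (𝓝 (A * ‖x‖)) := by
      simpa using (tendsto_inv_atTop_zero.const_mul B).const_add (A * ‖x‖)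
    refine ge_of_tendsto hlim ((eventually_gt_atTop 0).mono fun t ht => ?_)
    have := h (t • x)
    rw [map_smul, smul_eq_mul, norm_smul, Real.norm_of_nonneg ht.le] at this
    calc x' x = t⁻¹ * (t * x' x) := by field_simp
      _ ≤ t⁻¹ * (A * (t * ‖x‖) + B) := by gcongr
      _ = A * ‖x‖ + B * t⁻¹ := by field_simp
  refine x'.opNorm_le_bound hA fun x => abs_le.mpr ⟨?_, hle x⟩
  linarith [show -x' x ≤ A * ‖x‖ by simpa using hle (-x)]

theorem WeakDual.mem_closure_of_convex_of_norming {S : Set (WeakDual ℝ X)} (hS : Convex ℝ S)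
    (hnorming : ∀ v : X, ∀ η > 0, ∃ s ∈ S, ‖v‖ - η < s v) {x' : WeakDual ℝ X}
    (hx' : ‖toStrongDual x'‖ ≤ 1) : x' ∈ closure S := by
  -- `WeakDual` is a type synonym, and this instance is only declared for `WeakBilin`.
  have : LocallyConvexSpace ℝ (WeakDual ℝ X) := WeakBilin.locallyConvexSpace
  by_contra hx
  obtain ⟨ℓ, u, hℓS, hℓx⟩ := geometric_hahn_banach_closed_point hS.closure isClosed_closure hx
  obtain ⟨v, rfl⟩ := LinearMap.dualEmbedding_surjective (topDualPairing ℝ X) ℓ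
  have hxv : x' v ≤ ‖v‖ :=
    (le_abs_self _).trans (by simpa using (toStrongDual x').le_of_opNorm_le hx' v)
  obtain ⟨s, hs, hsv⟩ := hnorming v (‖v‖ - u) (by change u < x' v at hℓx; linarith)
  have : s v < u := hℓS s (subset_closure hs)
  linarith

variable [NormedSpace ℝ Y]

theorem exists_ultrafilter_tendsto_apply_of_norm_le {ι : Type*} (l : Filter ι) [l.NeBot]
    {r : ℝ} (ψ : ι → StrongDual ℝ Y) (hψ : ∀ i, ‖ψ i‖ ≤ r) :
    ∃ φ : StrongDual ℝ Y, ‖φ‖ ≤ r ∧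
      ∃ U : Ultrafilter ι, ↑U ≤ l ∧ ∀ y, Tendsto (fun i => ψ i y) U (𝓝 (φ y)) := by
  let U := Ultrafilter.of l
  have hUK : U.map (StrongDual.toWeakDual ∘ ψ) ≤
      𝓟 (WeakDual.toStrongDual ⁻¹' Metric.closedBall (0 : StrongDual ℝ Y) r) :=
    le_principal_iff.mpr (mem_map.mpr (univ_mem' fun i => by simpa using hψ i))
  obtain ⟨φ, hφ, hUφ⟩ := (WeakDual.isCompact_closedBall 0 r).ultrafilter_le_nhds _ hUK
  refine ⟨WeakDual.toStrongDual φ, by simpa using hφ, U, Ultrafilter.of_le l, fun y => ?_⟩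
  exact ((WeakDual.eval_continuous y).tendsto φ).comp hUφ

def ApproxFactors (f : X → Y) (c : ℝ) (g : X → ℝ) : Prop :=
  ∃ φ : StrongDual ℝ Y, ‖φ‖ ≤ 1 ∧ ∀ x, |φ (f x) - g x| ≤ c

theorem convex_setOf_approxFactors (f : X → Y) (c : ℝ) :
    Convex ℝ {x' : WeakDual ℝ X | ApproxFactors f c x'} := by
  rintro x₁ ⟨φ₁, hφ₁, h₁⟩ x₂ ⟨φ₂, hφ₂, h₂⟩ a b ha hb hab
  refine ⟨a • φ₁ + b • φ₂, ?_, fun x => ?_⟩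
  · calc ‖a • φ₁ + b • φ₂‖ ≤ a * ‖φ₁‖ + b * ‖φ₂‖ := by
          refine (norm_add_le _ _).trans ?_
          rw [norm_smul, norm_smul, Real.norm_of_nonneg ha, Real.norm_of_nonneg hb]
      _ ≤ a * 1 + b * 1 := by gcongr
      _ = 1 := by rw [mul_one, mul_one, hab]
  · calc |(a • φ₁ + b • φ₂) (f x) - (a • x₁ + b • x₂) x|
        = |a * (φ₁ (f x) - x₁ x) + b * (φ₂ (f x) - x₂ x)| := by
          change |a * φ₁ (f x) + b * φ₂ (f x) - (a * x₁ x + b * x₂ x)| = _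
          ring_nf
      _ ≤ a * c + b * c := by
          refine (abs_add_le _ _).trans ?_
          rw [abs_mul, abs_mul, abs_of_nonneg ha, abs_of_nonneg hb]
          gcongr
          exacts [h₁ x, h₂ x]
      _ = c := by rw [← add_mul, hab, one_mul]

theorem isClosed_setOf_approxFactors (f : X → Y) (c : ℝ) :
    IsClosed {x' : WeakDual ℝ X | ApproxFactors f c x'} := by
  refine closure_subset_iff_isClosed.mp fun x' hx' => ?_
  have := mem_closure_iff_comap_neBot.mp hx'
  choose φ hφ hφx using fun s : {x' : WeakDual ℝ X | ApproxFactors f c x'} => s.2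
  obtain ⟨φ₀, hφ₀, U, hU, hlim⟩ := exists_ultrafilter_tendsto_apply_of_norm_le
    (comap ((↑) : {x' : WeakDual ℝ X | ApproxFactors f c x'} → WeakDual ℝ X) (𝓝 x')) φ hφ
  refine ⟨φ₀, hφ₀, fun x => le_of_tendsto' ((hlim (f x)).sub ?_).abs fun s => hφx s x⟩
  exact ((WeakDual.eval_continuous x).tendsto x').comp (tendsto_comap.mono_left hU)

namespace StdEpsIsom

variable {ε : ℝ} {f : X → Y}

theorem apply_le_of_norming (hf : StdEpsIsom ε f) {ψ : StrongDual ℝ Y} (hψ : ‖ψ‖ ≤ 1) {u : X}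
    (hψu : ψ (f u - f (-u)) = ‖f u - f (-u)‖) (x : X) :
    ψ (f x) ≤ ‖x + u‖ - ‖u‖ + 3 * ε := by
  have hψle : ∀ y, ψ y ≤ ‖y‖ := fun y =>
    (le_abs_self _).trans (by simpa using ψ.le_of_opNorm_le hψ y)
  have hfu : ψ (f u) ≤ ‖u‖ + ε := (hψle _).trans (hf.norm_le u)
  have hd : 2 * ‖u‖ - ε ≤ ‖f u - f (-u)‖ := by
    have := hf.le_norm_sub u (-u)
    rwa [sub_neg_eq_add, ← two_smul ℝ, norm_smul, Real.norm_two] at this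
  have hx : ψ (f x - f (-u)) ≤ ‖x + u‖ + ε := by
    simpa using (hψle _).trans (hf.norm_sub_le x (-u))
  rw [map_sub] at hψu hx
  linarith

theorem approxFactors_fderiv_norm (hf : StdEpsIsom ε f) {z : X}
    (hz : DifferentiableAt ℝ (‖·‖) z) : ApproxFactors f (3 * ε) (fderiv ℝ (‖·‖) z) := by
  choose ψ hψ hψz using fun t : ℝ => exists_dual_vector'' ℝ (f (t⁻¹ • z) - f (-(t⁻¹ • z)))
  simp only [RCLike.ofReal_real_eq_id, id] at hψz
  obtain ⟨φ, hφ, U, hU, hlim⟩ := exists_ultrafilter_tendsto_apply_of_norm_le (𝓝[>] 0) ψ hψ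
  have hpos : ∀ᶠ t in (U : Filter ℝ), 0 < t := hU self_mem_nhdsWithin
  have hslope (x : X) : Tendsto (fun t : ℝ => t⁻¹ * (‖z + t • x‖ - ‖z‖) + 3 * ε) U
      (𝓝 (fderiv ℝ (‖·‖) z x + 3 * ε)) :=
    ((hz.tendsto_slope_norm x).mono_left hU).add_const _
  refine ⟨φ, hφ, fun x => abs_sub_le_iff.mpr ⟨?_, ?_⟩⟩
  · have : φ (f x) ≤ fderiv ℝ (‖·‖) z x + 3 * ε := by
      refine le_of_tendsto_of_tendsto (hlim (f x)) (hslope x) (hpos.mono fun t ht => ?_)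
      beta_reduce
      rw [← norm_add_inv_smul_sub_norm x z ht]
      exact hf.apply_le_of_norming (hψ t) (hψz t) x
    linarith
  · have : -φ (f x) ≤ fderiv ℝ (‖·‖) z (-x) + 3 * ε := by
      refine le_of_tendsto_of_tendsto (hlim (f x)).neg (hslope (-x)) (hpos.mono fun t ht => ?_)
      beta_reduce
      rw [← norm_add_inv_smul_sub_norm (-x) z ht]
      have := hf.apply_le_of_norming (u := -(t⁻¹ • z)) (ψ := -ψ t) (by rw [norm_neg]; exact hψ t)
        (by rw [neg_neg, neg_apply, ← map_neg, neg_sub, norm_sub_rev]; exact hψz t) x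
      have e : ‖-x + t⁻¹ • z‖ = ‖x + -(t⁻¹ • z)‖ := by rw [← norm_neg]; congr 1; abel
      rwa [e, ← norm_neg (t⁻¹ • z)]
    rw [map_neg] at this
    linarith

theorem approxFactors_of_finiteDimensional [FiniteDimensional ℝ X] (hf : StdEpsIsom ε f)
    {x' : StrongDual ℝ X} (hx' : ‖x'‖ ≤ 1) : ApproxFactors f (3 * ε) x' := by
  have hnorming (v : X) (η : ℝ) (hη : η > 0) :
      ∃ s ∈ {x' : WeakDual ℝ X | ApproxFactors f (3 * ε) x'}, ‖v‖ - η < s v := by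
    obtain ⟨z, hz, hzv⟩ := exists_differentiableAt_norm_lt_fderiv_apply v hη
    exact ⟨StrongDual.toWeakDual (fderiv ℝ (‖·‖) z), hf.approxFactors_fderiv_norm hz, hzv⟩
  exact (isClosed_setOf_approxFactors f _).closure_subset
    (WeakDual.mem_closure_of_convex_of_norming (convex_setOf_approxFactors f _) hnorming
      (x' := StrongDual.toWeakDual x') hx')

theorem approxFactors (hf : StdEpsIsom ε f) {x' : StrongDual ℝ X} (hx' : ‖x'‖ ≤ 1) :
    ApproxFactors f (3 * ε) x' := by
  have hF (F : Finset X) :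
      ∃ φ : StrongDual ℝ Y, ‖φ‖ ≤ 1 ∧ ∀ x ∈ F, |φ (f x) - x' x| ≤ 3 * ε := by
    let L := (Submodule.span ℝ (F : Set X)).subtypeₗᵢ
    obtain ⟨φ, hφ, hφx⟩ := (hf.comp_linearIsometry L).approxFactors_of_finiteDimensional
      (x' := x'.comp L.toContinuousLinearMap)
      ((ContinuousLinearMap.opNorm_comp_le _ _).trans
        (mul_le_one₀ hx' (norm_nonneg _) L.norm_toContinuousLinearMap_le))
    exact ⟨φ, hφ, fun x hx => hφx ⟨x, Submodule.subset_span hx⟩⟩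
  choose φ hφ hφx using hF
  obtain ⟨φ₀, hφ₀, U, hU, hlim⟩ := exists_ultrafilter_tendsto_apply_of_norm_le atTop φ hφ
  refine ⟨φ₀, hφ₀, fun x => le_of_tendsto ((hlim (f x)).sub_const (x' x)).abs ?_⟩
  filter_upwards [hU (eventually_ge_atTop {x})] with F hF
  exact hφx F x (Finset.singleton_subset_iff.mp hF)

theorem norm_le_of_abs_sub_le {C : ℝ} (hf : StdEpsIsom ε f) {φ : StrongDual ℝ Y}
    {x' : StrongDual ℝ X} (h : ∀ x, |φ (f x) - x' x| ≤ C) : ‖x'‖ ≤ ‖φ‖ := by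
  refine StrongDual.norm_le_of_apply_le_mul_norm_add (norm_nonneg φ) (B := ‖φ‖ * ε + C)
    fun x => ?_
  have h₁ := (abs_le.mp (h x)).1
  have h₂ : φ (f x) ≤ ‖φ‖ * (‖x‖ + ε) :=
    (le_abs_self _).trans ((φ.le_opNorm (f x)).trans (by gcongr; exact hf.norm_le x))
  linarith

end StdEpsIsom

end

theorem stmt0_general {X Y : Type*} [NormedAddCommGroup X] [NormedSpace ℝ X]
    [NormedAddCommGroup Y] [NormedSpace ℝ Y]
    (ε : ℝ) (hε : 0 ≤ ε) (f : X → Y) (hf : StdEpsIsom ε f) (x' : X →L[ℝ] ℝ) :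
    ∃ φ : Y →L[ℝ] ℝ, ‖φ‖ = ‖x'‖ ∧ ∀ x : X, |φ (f x) - x' x| ≤ 4 * ε * ‖x'‖ := by
  have hx'₁ : ‖‖x'‖⁻¹ • x'‖ ≤ 1 := by
    rw [norm_smul, norm_inv, norm_norm]
    exact inv_mul_le_one_of_le₀ le_rfl (norm_nonneg _)
  obtain ⟨φ₁, hφ₁, hφ₁x⟩ := hf.approxFactors hx'₁
  have hx' (x : X) : ‖x'‖ * (‖x'‖⁻¹ • x') x = x' x := by
    rcases eq_or_ne ‖x'‖ 0 with h | h
    · simp [norm_eq_zero.mp h]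
    · exact mul_inv_cancel_left₀ h (x' x)
  have hbound (x : X) : |(‖x'‖ • φ₁) (f x) - x' x| ≤ 3 * ε * ‖x'‖ := by
    calc |(‖x'‖ • φ₁) (f x) - x' x|
        = |‖x'‖ * (φ₁ (f x) - (‖x'‖⁻¹ • x') x)| := by rw [mul_sub, hx']; rfl
      _ = ‖x'‖ * |φ₁ (f x) - (‖x'‖⁻¹ • x') x| := by rw [abs_mul, abs_norm]
      _ ≤ ‖x'‖ * (3 * ε) := by gcongr; exact hφ₁x x
      _ = 3 * ε * ‖x'‖ := mul_comm _ _
  refine ⟨‖x'‖ • φ₁, le_antisymm ?_ (hf.norm_le_of_abs_sub_le hbound), fun x => ?_⟩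
  · rw [norm_smul, norm_norm]
    exact mul_le_of_le_one_right (norm_nonneg _) hφ₁
  · exact (hbound x).trans (by gcongr; norm_num)

/-- Cheng–Dong–Zhang: for a standard ε-isometry `f : X → Y` and any `x* ∈ X*` there is
`φ ∈ Y*` with `‖φ‖ = ‖x*‖` and `|⟨φ, f x⟩ - ⟨x*, x⟩| ≤ 4 ε ‖x*‖` for all `x`. -/
theorem stmt0 {X Y : Type*} [NormedAddCommGroup X] [NormedSpace ℝ X] [CompleteSpace X]
    [NormedAddCommGroup Y] [NormedSpace ℝ Y] [CompleteSpace Y]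
    (ε : ℝ) (hε : 0 ≤ ε) (f : X → Y) (hf : StdEpsIsom ε f) (x' : X →L[ℝ] ℝ) :
    ∃ φ : Y →L[ℝ] ℝ, ‖φ‖ = ‖x'‖ ∧ ∀ x : X, |φ (f x) - x' x| ≤ 4 * ε * ‖x'‖ :=
  stmt0_general ε hε f hf x'
end
end

section
/- Let X be a closed linear subspace of a real Banach space Y such that the cardinality of X equals the cardinality of Y. Then for every ε > 0 there exists a standard ε-isometry f : X → Y such that (1) the closed linear span of f(X) equals Y, and (2) if f is stable, then X is complemented in Y, i.e. there exists a bounded linear projection from Y onto X. -/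
open scoped ENNReal ZeroAtInfty

noncomputable section

set_option maxHeartbeats 1000000 in
/-- Qian's construction: if `X` is a closed subspace of a Banach space `Y` with
`card X = card Y`, then for every `ε > 0` there is a standard ε-isometry `f : X → Y` with
`L(f) = Y` such that stability of `f` forces `X` to be complemented in `Y`. -/
theorem stmt1 {Y : Type*} [NormedAddCommGroup Y] [NormedSpace ℝ Y] [CompleteSpace Y]
    (X : Submodule ℝ Y) (hXc : IsClosed (X : Set Y))
    (hcard : Cardinal.mk X = Cardinal.mk Y) (ε : ℝ) (hε : 0 < ε) :
    ∃ f : X → Y, StdEpsIsom ε f ∧ Lf f = ⊤ ∧ (IsStable ε f → X.ClosedComplemented) := by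
  by_cases hY : Nontrivial Y
  swap
  · -- trivial case
    have hsub : Subsingleton Y := not_nontrivial_iff_subsingleton.mp hY
    refine ⟨fun x => (x : Y), ⟨rfl, fun x y => ?_⟩, ?_, fun _ => ?_⟩
    · have : ‖(x : Y) - (y : Y)‖ = ‖x - y‖ := rfl
      rw [this]; simpa using hε.le
    · have : ∀ y : Y, y = 0 := fun y => Subsingleton.elim _ _
      refine eq_top_iff.mpr fun y _ => ?_
      rw [this y]; exact zero_mem _
    · exact ⟨0, fun x => Subsingleton.elim _ _⟩
  · -- nontrivial case
    classical
    have hXnt : Nontrivial X := by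
      have h1 : (1 : Cardinal) < Cardinal.mk X := by
        rw [hcard]; exact Cardinal.one_lt_iff_nontrivial.mpr hY
      exact Cardinal.one_lt_iff_nontrivial.mp h1
    obtain ⟨x1, hx1⟩ := exists_ne (0 : X)
    set x0 : X := (3 / (2 * ‖x1‖)) • x1 with hx0def
    have hx1n : (0:ℝ) < ‖x1‖ := norm_pos_iff.mpr hx1
    have hx0 : ‖x0‖ = 3 / 2 := by
      rw [hx0def, norm_smul, Real.norm_eq_abs, abs_of_pos (by positivity)]
      have hne : ‖(x1 : Y)‖ ≠ 0 := ne_of_gt hx1n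
      field_simp
    set A : X → Prop := fun x => 1 < ‖x‖ ∧ ‖x‖ < 2 with hA
    set j : X → {x : X // A x} := fun x =>
      ⟨x0 + (4 + 4 * ‖x‖)⁻¹ • x, by
        have hd : (0:ℝ) < 4 + 4 * ‖x‖ := by positivity
        have hns : ‖(4 + 4 * ‖x‖)⁻¹ • x‖ = ‖x‖ / (4 + 4 * ‖x‖) := by
          rw [norm_smul, Real.norm_eq_abs, abs_of_pos (by positivity)]; ring
        have hlt : ‖(4 + 4 * ‖x‖)⁻¹ • x‖ < 1 / 4 := by
          rw [hns, div_lt_iff₀ hd]; nlinarith [norm_nonneg x]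
        have hge : (0:ℝ) ≤ ‖(4 + 4 * ‖x‖)⁻¹ • x‖ := norm_nonneg _
        constructor
        · have := norm_sub_norm_le x0 (-((4 + 4 * ‖x‖)⁻¹ • x))
          have h2 : ‖x0 - -((4 + 4 * ‖x‖)⁻¹ • x)‖ = ‖x0 + (4 + 4 * ‖x‖)⁻¹ • x‖ := by
            rw [sub_neg_eq_add]
          rw [h2, hx0, norm_neg] at this
          linarith
        · have := norm_add_le x0 ((4 + 4 * ‖x‖)⁻¹ • x)
          rw [hx0] at this; linarith⟩ with hj
    have hjinj : Function.Injective j := by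
      intro x y hxy
      have h1 : x0 + (4 + 4 * ‖x‖)⁻¹ • x = x0 + (4 + 4 * ‖y‖)⁻¹ • y := congrArg Subtype.val hxy
      have h2 : (4 + 4 * ‖x‖)⁻¹ • x = (4 + 4 * ‖y‖)⁻¹ • y := add_left_cancel h1
      have hdx : (0:ℝ) < 4 + 4 * ‖x‖ := by positivity
      have hdy : (0:ℝ) < 4 + 4 * ‖y‖ := by positivity
      have h3 : ‖x‖ / (4 + 4 * ‖x‖) = ‖y‖ / (4 + 4 * ‖y‖) := by
        have := congrArg norm h2
        rwa [norm_smul, norm_smul, Real.norm_eq_abs, Real.norm_eq_abs,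
          abs_of_pos (by positivity), abs_of_pos (by positivity), inv_mul_eq_div,
          inv_mul_eq_div] at this
      have h4 : ‖x‖ = ‖y‖ := by
        rw [div_eq_div_iff hdx.ne' hdy.ne'] at h3; nlinarith
      rw [h4] at h2
      exact smul_right_injective X (by positivity) h2
    have hcards : Cardinal.mk {y : Y // ‖y‖ ≤ 1} ≤ Cardinal.mk {x : X // A x} := by
      calc Cardinal.mk {y : Y // ‖y‖ ≤ 1} ≤ Cardinal.mk Y := Cardinal.mk_subtype_le _
        _ = Cardinal.mk X := hcard.symm
        _ ≤ Cardinal.mk {x : X // A x} := Cardinal.mk_le_of_injective hjinj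
    obtain ⟨em⟩ : Nonempty ({y : Y // ‖y‖ ≤ 1} ↪ {x : X // A x}) := by
      rwa [Cardinal.le_def] at hcards
    set ψ : {x : X // A x} → Y := fun a =>
      if h : ∃ b : {y : Y // ‖y‖ ≤ 1}, em b = a then (h.choose : Y) else 0 with hψ
    have hψnorm : ∀ a, ‖ψ a‖ ≤ 1 := by
      intro a; rw [hψ]; dsimp only
      split
      · next h => exact h.choose.2
      · simpa using zero_le_one
    have hψsurj : ∀ b : {y : Y // ‖y‖ ≤ 1}, ψ (em b) = (b : Y) := by
      intro b
      have h : ∃ b' : {y : Y // ‖y‖ ≤ 1}, em b' = em b := ⟨b, rfl⟩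
      rw [hψ]; dsimp only
      rw [dif_pos h]
      exact congrArg _ (em.injective h.choose_spec)
    set u : X → Y := fun x => if h : A x then ψ ⟨x, h⟩ else 0 with hu
    have hunorm : ∀ x, ‖u x‖ ≤ 1 := by
      intro x; rw [hu]; dsimp only
      split
      · exact hψnorm _
      · simpa using zero_le_one
    set f : X → Y := fun x => (x : Y) + (ε / 2) • u x with hf
    have hu0 : u 0 = 0 := by
      have hA0 : ¬ A (0 : X) := by
        rw [hA]; push_neg; intro h; exfalso
        simp only [norm_zero] at h; linarith
      rw [hu]; dsimp only
      rw [dif_neg hA0]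
    have hfnot : ∀ x : X, ¬ A x → f x = (x : Y) := by
      intro x hx; rw [hf]; dsimp only; rw [hu]; dsimp only; rw [dif_neg hx]; simp
    -- L f = ⊤
    have hLf : Lf f = ⊤ := by
      have hXmem : ∀ x : X, (x : Y) ∈ Lf f := by
        intro x
        by_cases hx : A x
        · have hhalf : ¬ A ((2:ℝ)⁻¹ • x) := by
            rw [hA]; push_neg; intro h; exfalso
            have : ‖(2:ℝ)⁻¹ • x‖ = ‖x‖ / 2 := by
              rw [norm_smul, Real.norm_eq_abs, abs_of_pos (by norm_num : (0:ℝ) < 2⁻¹)]; ring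
            rw [this] at h
            rcases hx with ⟨_, hx2⟩; linarith
          have h1 : (((2:ℝ)⁻¹ • x : X) : Y) ∈ Lf f := by
            rw [← hfnot _ hhalf]; exact mem_Lf f _
          have h2 : ((2:ℝ) : ℝ) • (((2:ℝ)⁻¹ • x : X) : Y) = (x : Y) := by
            rw [Submodule.coe_smul, smul_smul]; norm_num
          rw [← h2]; exact Submodule.smul_mem _ _ h1
        · rw [← hfnot _ hx]; exact mem_Lf f _
      have humem : ∀ x : X, u x ∈ Lf f := by
        intro x
        have h1 : (ε/2) • u x ∈ Lf f := by
          have heq : (ε/2) • u x = f x - (x : Y) := by rw [hf]; dsimp only; abel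
          rw [heq]; exact Submodule.sub_mem _ (mem_Lf f x) (hXmem x)
        have h2 : ((ε/2)⁻¹ : ℝ) • ((ε/2) • u x) = u x := by
          rw [smul_smul, inv_mul_cancel₀ (by positivity), one_smul]
        rw [← h2]; exact Submodule.smul_mem _ _ h1
      have hball : ∀ y : Y, ‖y‖ ≤ 1 → y ∈ Lf f := by
        intro y hy
        set a := em ⟨y, hy⟩ with ha
        have h1 : u (a : X) = y := by
          rw [hu]; dsimp only
          rw [dif_pos a.2]
          have heta : (⟨(a : X), a.2⟩ : {x : X // A x}) = a := rfl
          rw [heta, ha, hψsurj]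
        rw [← h1]; exact humem _
      refine eq_top_iff.mpr fun y _ => ?_
      by_cases hy : y = 0
      · rw [hy]; exact zero_mem _
      · have hyn : (0:ℝ) < ‖y‖ := norm_pos_iff.mpr hy
        have h1 : ‖(‖y‖⁻¹ : ℝ) • y‖ ≤ 1 := by
          rw [norm_smul, Real.norm_eq_abs, abs_of_pos (by positivity),
            inv_mul_cancel₀ (ne_of_gt hyn)]
        have h2 : (‖y‖ : ℝ) • ((‖y‖⁻¹ : ℝ) • y) = y := by
          rw [smul_smul, mul_inv_cancel₀ (ne_of_gt hyn), one_smul]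
        rw [← h2]; exact Submodule.smul_mem _ _ (hball _ h1)
    refine ⟨f, ⟨?_, ?_⟩, hLf, ?_⟩
    · rw [hf]; dsimp only; rw [hu0]; simp
    · -- ε-isometry estimate
      intro x y
      have key : f x - f y - ((x : Y) - (y : Y)) = (ε / 2) • (u x - u y) := by
        rw [hf]; dsimp only
        rw [smul_sub]; abel
      have h1 : |‖f x - f y‖ - ‖(x:Y) - (y:Y)‖| ≤ ‖f x - f y - ((x:Y) - (y:Y))‖ :=
        abs_norm_sub_norm_le _ _
      have h2 : ‖f x - f y - ((x:Y) - (y:Y))‖ ≤ ε := by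
        rw [key, norm_smul, Real.norm_eq_abs, abs_of_pos (by positivity)]
        have h3 := norm_sub_le (u x) (u y)
        have hx := hunorm x; have hy := hunorm y
        nlinarith
      have h3 : ‖x - y‖ = ‖(x:Y) - (y:Y)‖ := rfl
      rw [h3]; linarith
    · -- stability implies complemented
      rintro ⟨α, γ, hα, hγ, T, hT, hTf⟩
      have hmem : ∀ y : Y, y ∈ Lf f := fun y => by rw [hLf]; trivial
      set P : Y →L[ℝ] X :=
        T.comp ((ContinuousLinearMap.id ℝ Y).codRestrict (Lf f) hmem) with hP
      have hest : ∀ x : X, ‖P (x : Y) - x‖ ≤ γ * ε + α * (ε / 2) := by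
        intro x
        have hsplit : (⟨f x, mem_Lf f x⟩ : Lf f)
            = (⟨(x : Y), hmem _⟩ : Lf f) + ⟨(ε/2) • u x, hmem _⟩ := by
          apply Subtype.ext
          show f x = (x : Y) + (ε/2) • u x
          rfl
        have hPx : P (x : Y) = T ⟨(x : Y), hmem _⟩ := rfl
        have hadd : T ⟨f x, mem_Lf f x⟩
            = T ⟨(x : Y), hmem _⟩ + T ⟨(ε/2) • u x, hmem _⟩ := by
          rw [hsplit, map_add]
        have hrw : P (x : Y) - x
            = (T ⟨f x, mem_Lf f x⟩ - x) - T ⟨(ε/2) • u x, hmem _⟩ := by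
          rw [hadd, hPx]; abel
        have hTu : ‖T ⟨(ε/2) • u x, hmem _⟩‖ ≤ α * (ε/2) := by
          have h1 : ‖T ⟨(ε/2) • u x, hmem _⟩‖ ≤ ‖T‖ * ‖(⟨(ε/2) • u x, hmem _⟩ : Lf f)‖ :=
            T.le_opNorm _
          have h2 : ‖(⟨(ε/2) • u x, hmem _⟩ : Lf f)‖ = ‖(ε/2) • u x‖ := rfl
          have h3 : ‖(ε/2) • u x‖ ≤ ε/2 := by
            rw [norm_smul, Real.norm_eq_abs, abs_of_pos (by positivity)]
            have := hunorm x; nlinarith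
          calc ‖T ⟨(ε/2) • u x, hmem _⟩‖ ≤ ‖T‖ * ‖(ε/2) • u x‖ := h2 ▸ h1
            _ ≤ α * (ε/2) := by
                apply mul_le_mul hT h3 (norm_nonneg _) (le_of_lt hα)
        calc ‖P (x : Y) - x‖ = ‖(T ⟨f x, mem_Lf f x⟩ - x) - T ⟨(ε/2) • u x, hmem _⟩‖ := by
              rw [hrw]
          _ ≤ ‖T ⟨f x, mem_Lf f x⟩ - x‖ + ‖T ⟨(ε/2) • u x, hmem _⟩‖ := norm_sub_le _ _
          _ ≤ γ * ε + α * (ε/2) := add_le_add (hTf x) hTu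
      have hfix : ∀ x : X, P (x : Y) = x := by
        intro x
        rw [← sub_eq_zero]
        by_contra hne
        have hd : (0:ℝ) < ‖P (x : Y) - x‖ := norm_pos_iff.mpr hne
        obtain ⟨n, hn⟩ := exists_nat_gt ((γ * ε + α * (ε/2)) / ‖P (x : Y) - x‖)
        have hscale : P (((n:ℝ) • x : X) : Y) - (n:ℝ) • x = (n:ℝ) • (P (x : Y) - x) := by
          rw [Submodule.coe_smul, map_smul, smul_sub]
        have hb := hest ((n:ℝ) • x)
        rw [hscale, norm_smul, Real.norm_eq_abs, abs_of_nonneg (by positivity : (0:ℝ) ≤ (n:ℝ))]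
          at hb
        rw [div_lt_iff₀ hd] at hn
        linarith
      exact ⟨P, fun x => hfix x⟩
end
end

section
/- Let X and Z be real Banach spaces and let T : X → Z be an injective bounded linear operator for which there exists λ ≥ 1 with ‖x‖ ≤ λ‖Tx‖ for all x ∈ X (i.e. T is a linear embedding). Define |||u||| = inf{ ‖x‖_X + λ‖u − Tx‖_Z : x ∈ X } for u ∈ Z. Then |||·||| is a norm on Z equivalent to ‖·‖_Z, and |||Tx||| = ‖x‖_X for all x ∈ X; in particular X is isometric to a closed subspace of (Z, |||·|||). -/
open scoped ENNReal ZeroAtInfty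

noncomputable section

universe u v

/-- The renorming `|||u||| = inf { ‖x‖ + λ ‖u - T x‖ : x ∈ X }` of `Z`. -/
def tripleNorm {X : Type u} {Z : Type v} [NormedAddCommGroup X] [NormedSpace ℝ X]
    [NormedAddCommGroup Z] [NormedSpace ℝ Z] (T : X →L[ℝ] Z) (lam : ℝ) (u : Z) : ℝ :=
  sInf (Set.range fun x : X => ‖x‖ + lam * ‖u - T x‖)

/-- If `T : X → Z` is an injective bounded linear operator with `‖x‖ ≤ λ ‖T x‖` (λ ≥ 1),
then `|||·||| = tripleNorm T λ` is a norm on `Z` equivalent to the original norm,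
`|||T x||| = ‖x‖` for all `x`, and the range of `T` is closed; in particular `X` is
isometric to a closed subspace of `(Z, |||·|||)`. -/
theorem stmt13 {X : Type u} {Z : Type v}
    [NormedAddCommGroup X] [NormedSpace ℝ X] [CompleteSpace X]
    [NormedAddCommGroup Z] [NormedSpace ℝ Z] [CompleteSpace Z]
    (T : X →L[ℝ] Z) (hinj : Function.Injective T)
    (lam : ℝ) (hlam : 1 ≤ lam) (hlow : ∀ x : X, ‖x‖ ≤ lam * ‖T x‖) :
    (∀ u v : Z, tripleNorm T lam (u + v) ≤ tripleNorm T lam u + tripleNorm T lam v) ∧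
    (∀ (a : ℝ) (u : Z), tripleNorm T lam (a • u) = |a| * tripleNorm T lam u) ∧
    (∀ u : Z, tripleNorm T lam u = 0 ↔ u = 0) ∧
    (∃ c₁ c₂ : ℝ, 0 < c₁ ∧ 0 < c₂ ∧
      ∀ u : Z, c₁ * ‖u‖ ≤ tripleNorm T lam u ∧ tripleNorm T lam u ≤ c₂ * ‖u‖) ∧
    (∀ x : X, tripleNorm T lam (T x) = ‖x‖) ∧
    IsClosed (Set.range T) := by
  have hlam0 : (0:ℝ) < lam := lt_of_lt_of_le one_pos hlam
  set N : Z → ℝ := tripleNorm T lam with hN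
  have hmem : ∀ (u : Z) (x : X),
      ‖x‖ + lam * ‖u - T x‖ ∈ Set.range fun x : X => ‖x‖ + lam * ‖u - T x‖ :=
    fun u x => ⟨x, rfl⟩
  have hne : ∀ u : Z, (Set.range fun x : X => ‖x‖ + lam * ‖u - T x‖).Nonempty :=
    fun u => ⟨_, hmem u 0⟩
  have hbdd : ∀ u : Z, BddBelow (Set.range fun x : X => ‖x‖ + lam * ‖u - T x‖) := by
    intro u
    refine ⟨0, ?_⟩
    rintro b ⟨x, rfl⟩
    positivity
  have hle : ∀ (u : Z) (x : X), N u ≤ ‖x‖ + lam * ‖u - T x‖ :=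
    fun u x => csInf_le (hbdd u) (hmem u x)
  have hge : ∀ (u : Z) (c : ℝ), (∀ x : X, c ≤ ‖x‖ + lam * ‖u - T x‖) → c ≤ N u := by
    intro u c h
    refine le_csInf (hne u) ?_
    rintro b ⟨x, rfl⟩
    exact h x
  have hnonneg : ∀ u : Z, 0 ≤ N u := by
    intro u
    refine hge u 0 fun x => ?_
    positivity
  -- triangle inequality
  have htri : ∀ u v : Z, N (u + v) ≤ N u + N v := by
    intro u v
    have key : ∀ x y : X,
        N (u + v) ≤ (‖x‖ + lam * ‖u - T x‖) + (‖y‖ + lam * ‖v - T y‖) := by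
      intro x y
      have h0 : N (u + v) ≤ ‖x + y‖ + lam * ‖u + v - T (x + y)‖ := hle _ _
      have h1 : ‖x + y‖ ≤ ‖x‖ + ‖y‖ := norm_add_le _ _
      have h2 : ‖u + v - T (x + y)‖ ≤ ‖u - T x‖ + ‖v - T y‖ := by
        have heq : u + v - T (x + y) = (u - T x) + (v - T y) := by
          rw [map_add]; abel
        rw [heq]; exact norm_add_le _ _
      nlinarith
    have h1 : ∀ x : X, N (u + v) - (‖x‖ + lam * ‖u - T x‖) ≤ N v := by
      intro x
      refine hge v _ fun y => ?_
      have := key x y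
      linarith
    have h2 : N (u + v) - N v ≤ N u := by
      refine hge u _ fun x => ?_
      have := h1 x
      linarith
    linarith
  -- smul scaling (one direction)
  have hsmul_le : ∀ (a : ℝ) (u : Z), a ≠ 0 → N (a • u) ≤ |a| * N u := by
    intro a u ha
    have ha' : 0 < |a| := abs_pos.mpr ha
    have key : ∀ x : X, N (a • u) ≤ |a| * (‖x‖ + lam * ‖u - T x‖) := by
      intro x
      have h1 : N (a • u) ≤ ‖a • x‖ + lam * ‖a • u - T (a • x)‖ := hle _ _
      have h2 : ‖a • x‖ = |a| * ‖x‖ := by rw [norm_smul, Real.norm_eq_abs]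
      have h3 : ‖a • u - T (a • x)‖ = |a| * ‖u - T x‖ := by
        rw [map_smul, ← smul_sub, norm_smul, Real.norm_eq_abs]
      rw [h2, h3] at h1
      nlinarith
    have hdiv : N (a • u) / |a| ≤ N u := by
      refine hge u _ fun x => ?_
      rw [div_le_iff₀ ha']
      exact (key x).trans_eq (mul_comm _ _)
    have := (div_le_iff₀ ha').mp hdiv
    linarith [this, mul_comm (N u) |a|]
  have hzero : N (0 : Z) = 0 := by
    refine le_antisymm ?_ (hnonneg 0)
    have := hle (0 : Z) 0
    simpa using this
  have hsmul : ∀ (a : ℝ) (u : Z), N (a • u) = |a| * N u := by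
    intro a u
    rcases eq_or_ne a 0 with rfl | ha
    · simp [hzero]
    · refine le_antisymm (hsmul_le a u ha) ?_
      have ha' : 0 < |a| := abs_pos.mpr ha
      have h1 : N u ≤ |a⁻¹| * N (a • u) := by
        have := hsmul_le a⁻¹ (a • u) (inv_ne_zero ha)
        rwa [smul_smul, inv_mul_cancel₀ ha, one_smul] at this
      rw [abs_inv] at h1
      calc |a| * N u ≤ |a| * (|a|⁻¹ * N (a • u)) := by
            exact mul_le_mul_of_nonneg_left h1 ha'.le
        _ = N (a • u) := by field_simp
  -- equivalence constants
  set M : ℝ := max ‖T‖ 1 with hM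
  have hM1 : (1:ℝ) ≤ M := le_max_right _ _
  have hM0 : (0:ℝ) < M := lt_of_lt_of_le one_pos hM1
  have hTM : ‖T‖ ≤ M := le_max_left _ _
  have hlower : ∀ u : Z, M⁻¹ * ‖u‖ ≤ N u := by
    intro u
    refine hge u _ fun x => ?_
    rw [inv_mul_le_iff₀ hM0]
    have h1 : ‖u‖ ≤ ‖u - T x‖ + ‖T x‖ := by
      have := norm_add_le (u - T x) (T x)
      simpa using this
    have h2 : ‖T x‖ ≤ ‖T‖ * ‖x‖ := T.le_opNorm x
    have h3 : (1:ℝ) ≤ M * lam := by nlinarith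
    nlinarith [norm_nonneg x, norm_nonneg (u - T x),
      mul_nonneg (sub_nonneg.mpr hTM) (norm_nonneg x),
      mul_nonneg (sub_nonneg.mpr h3) (norm_nonneg (u - T x))]
  have hupper : ∀ u : Z, N u ≤ lam * ‖u‖ := by
    intro u
    have := hle u 0
    simpa using this
  have hzeroiff : ∀ u : Z, N u = 0 ↔ u = 0 := by
    intro u
    constructor
    · intro h
      have h1 := hlower u
      rw [h] at h1
      have : ‖u‖ ≤ 0 := by
        have := (inv_pos.mpr hM0)
        nlinarith
      exact norm_le_zero_iff.mp this
    · rintro rfl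
      exact hzero
  -- norm of T x
  have hTx : ∀ x : X, N (T x) = ‖x‖ := by
    intro x
    refine le_antisymm ?_ ?_
    · have := hle (T x) x
      simpa using this
    · refine hge (T x) _ fun y => ?_
      have h1 : ‖x - y‖ ≤ lam * ‖T x - T y‖ := by
        have := hlow (x - y)
        rwa [map_sub] at this
      have h2 : ‖x‖ - ‖y‖ ≤ ‖x - y‖ := norm_sub_norm_le _ _
      linarith
  refine ⟨htri, hsmul, hzeroiff, ⟨M⁻¹, lam, inv_pos.mpr hM0, hlam0, fun u => ⟨hlower u, hupper u⟩⟩,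
    hTx, ?_⟩
  -- closed range
  have hanti : AntilipschitzWith (⟨lam, hlam0.le⟩ : NNReal) T := by
    apply ContinuousLinearMap.antilipschitz_of_bound
    intro x
    exact hlow x
  exact hanti.isClosed_range T.uniformContinuous
end
end
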